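/- Let n be a nonempty finite type and G, H Hermitian matrices in Matrix n n ℂ. Then Re((G * ρ).trace) ≤ Re((H * ρ).trace) holds for every density matrix ρ if and only if (H - G).PosSemidef. (This identifies the satisfiability order on quantum predicates with the Loewner order.) -/

import Mathlib

/-!
Both sides only depend on `A = H - G`, by linearity of `ρ ↦ Re tr(Aρ)`. If `A` is positive
semidefinite and `ρ = Cᴴ C`, then `tr(Aρ) = tr(C A Cᴴ) ≥ 0`. Conversely, testing against the
density matrix `x xᴴ / (xᴴ x)` gives `xᴴ A x ≥ 0`, whose imaginary part vanishes since `A` is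
Hermitian.
-/

open scoped ComplexOrder

namespace Matrix

theorem trace_mul_vecMulVec_star {n R : Type*} [Fintype n] [CommSemiring R] [Star R]
    (A : Matrix n n R) (x : n → R) :
    (A * vecMulVec x (star x)).trace = star x ⬝ᵥ (A *ᵥ x) := by
  rw [mul_vecMulVec, trace_vecMulVec, dotProduct_comm]

variable {n 𝕜 : Type*} [Fintype n] [RCLike 𝕜]

theorem PosSemidef.trace_mul_nonneg {A B : Matrix n n 𝕜} (hA : A.PosSemidef)
    (hB : B.PosSemidef) : 0 ≤ (A * B).trace := by
  classical
  open scoped MatrixOrder in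
  obtain ⟨C, rfl⟩ := CStarAlgebra.nonneg_iff_eq_star_mul_self.mp hB.nonneg
  rw [star_eq_conjTranspose, ← Matrix.mul_assoc, trace_mul_comm, ← Matrix.mul_assoc]
  exact (hA.mul_mul_conjTranspose_same C).trace_nonneg

theorem IsHermitian.posSemidef_iff_forall_density_re_trace_mul_nonneg {A : Matrix n n 𝕜}
    (hA : A.IsHermitian) :
    A.PosSemidef ↔
      ∀ ρ : Matrix n n 𝕜, ρ.PosSemidef → ρ.trace = 1 → 0 ≤ RCLike.re (A * ρ).trace := by
  refine ⟨fun h ρ hρ _ => (RCLike.nonneg_iff.mp (h.trace_mul_nonneg hρ)).1, fun h => ?_⟩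
  refine .of_dotProduct_mulVec_nonneg hA fun x => ?_
  refine RCLike.nonneg_iff.mpr ⟨?_, hA.im_star_dotProduct_mulVec_self x⟩
  rcases eq_or_ne x 0 with rfl | hx
  · simp
  have hnorm : 0 < star x ⬝ᵥ x := dotProduct_star_self_pos_iff.mpr hx
  obtain ⟨r, hr, hr_eq⟩ := RCLike.pos_iff_exists_ofReal.mp (inv_pos.mpr hnorm)
  have hρ : ((r : 𝕜) • vecMulVec x (star x)).PosSemidef :=
    (posSemidef_vecMulVec_self_star x).smul (by positivity)
  have htr : ((r : 𝕜) • vecMulVec x (star x)).trace = 1 := by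
    rw [trace_smul, trace_vecMulVec, dotProduct_comm, hr_eq, smul_eq_mul,
      inv_mul_cancel₀ hnorm.ne']
  have htest := h _ hρ htr
  rw [Matrix.mul_smul, trace_smul, trace_mul_vecMulVec_star, smul_eq_mul,
    RCLike.re_ofReal_mul] at htest
  exact nonneg_of_mul_nonneg_right htest hr

end Matrix

theorem sat_order_iff_loewner_order_general
    {n : Type*} [Fintype n]
    (G H : Matrix n n ℂ) (hG : G.IsHermitian) (hH : H.IsHermitian) :
    (∀ ρ : Matrix n n ℂ, ρ.PosSemidef → ρ.trace = 1 →
      ((G * ρ).trace).re ≤ ((H * ρ).trace).re) ↔ (H - G).PosSemidef := by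
  rw [(hH.sub hG).posSemidef_iff_forall_density_re_trace_mul_nonneg]
  refine forall₃_congr fun ρ _ _ => ?_
  rw [Matrix.sub_mul, Matrix.trace_sub, map_sub, sub_nonneg]
  rfl

/-- The satisfiability order on Hermitian quantum predicates coincides with the Loewner
order: `Re((G * ρ).trace) ≤ Re((H * ρ).trace)` for all density matrices `ρ` iff
`H - G` is positive semidefinite. -/
theorem sat_order_iff_loewner_order
    {n : Type*} [Fintype n] [DecidableEq n] [Nonempty n]
    (G H : Matrix n n ℂ) (hG : G.IsHermitian) (hH : H.IsHermitian) :
    (∀ ρ : Matrix n n ℂ, ρ.PosSemidef → ρ.trace = 1 →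
      ((G * ρ).trace).re ≤ ((H * ρ).trace).re) ↔ (H - G).PosSemidef :=
  sat_order_iff_loewner_order_general G H hG hH
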